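/- Let D be an oriented graph whose missing graph is a comb. Then the dependency digraph Δ(D) contains no directed cycle; consequently Δ(D) is a disjoint union of directed paths. -/

import Mathlib

variable {V : Type*}

/-- An oriented graph: no loops and no digons. -/
def Oriented (E : V → V → Prop) : Prop :=
  (∀ x, ¬ E x x) ∧ ∀ x y, E x y → ¬ E y x

/-- `{x, y}` is a missing edge of the digraph `E`. -/
def Missing (E : V → V → Prop) (x y : V) : Prop :=
  x ≠ y ∧ ¬ E x y ∧ ¬ E y x

/-- The first out-neighborhood of `v`. -/
def NPlus (E : V → V → Prop) (v : V) : Set V := {y | E v y}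

/-- The second out-neighborhood of `v`: vertices at directed distance exactly 2 from `v`. -/
def NPlusPlus (E : V → V → Prop) (v : V) : Set V :=
  {y | y ≠ v ∧ ¬ E v y ∧ ∃ z, E v z ∧ E z y}

/-- The missing edge `x₁y₁` loses to the missing edge `x₂y₂`. -/
def Loses (E : V → V → Prop) (x1 y1 x2 y2 : V) : Prop :=
  E x1 x2 ∧ y2 ∉ NPlus E x1 ∪ NPlusPlus E x1 ∧
  E y1 y2 ∧ x2 ∉ NPlus E y1 ∪ NPlusPlus E y1

/-- There is an arc in the dependency digraph from the missing edge `{a,b}` to the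
missing edge `{c,d}`, i.e. `ab` loses to `cd` under some labelling. -/
def DepArc (E : V → V → Prop) (a b c d : V) : Prop :=
  Loses E a b c d ∨ Loses E a b d c

/-- The missing edge `ab` is good. -/
def Good (E : V → V → Prop) (a b : V) : Prop :=
  (∀ v, v ≠ a → v ≠ b → E v a → b ∈ NPlus E v ∪ NPlusPlus E v) ∨
  (∀ v, v ≠ a → v ≠ b → E v b → a ∈ NPlus E v ∪ NPlusPlus E v)

/-- The missing graph of the digraph `E`. -/
def missingGraph (E : V → V → Prop) : SimpleGraph V :=
  SimpleGraph.fromRel (fun x y => ¬ E x y ∧ ¬ E y x)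

/-- The cycle graph on `n` vertices. -/
def cycleGraph (n : ℕ) : SimpleGraph (Fin n) :=
  SimpleGraph.fromRel (fun x y => (x.val + 1) % n = y.val)

/-- The chair: vertices `0,1,2,3,4` with exactly the edges `01, 12, 23, 24`. -/
def chairGraph : SimpleGraph (Fin 5) :=
  SimpleGraph.fromRel (fun x y =>
    (x = 0 ∧ y = 1) ∨ (x = 1 ∧ y = 2) ∨ (x = 2 ∧ y = 3) ∨ (x = 2 ∧ y = 4))

/-- A comb: no induced `C₄`, co-`C₄`, `C₅`, chair or co-chair. -/
def IsComb {W : Type*} (G : SimpleGraph W) : Prop :=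
  IsEmpty (cycleGraph 4 ↪g G) ∧ IsEmpty ((cycleGraph 4)ᶜ ↪g G) ∧
  IsEmpty (cycleGraph 5 ↪g G) ∧ IsEmpty (chairGraph ↪g G) ∧
  IsEmpty (chairGraphᶜ ↪g G)

/-- A threshold graph: no induced `C₄`, co-`C₄` or `P₄`. -/
def IsThresholdGraph {W : Type*} (G : SimpleGraph W) : Prop :=
  IsEmpty (cycleGraph 4 ↪g G) ∧ IsEmpty ((cycleGraph 4)ᶜ ↪g G) ∧
  IsEmpty (SimpleGraph.pathGraph 4 ↪g G)

/-- Every vertex of the dependency digraph of `E` has out-degree and in-degree at most 1. -/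
def DepDegLeOne (E : V → V → Prop) : Prop :=
  ∀ a b, Missing E a b →
    (∀ c d c' d', Missing E c d → Missing E c' d' →
      DepArc E a b c d → DepArc E a b c' d' → s(c, d) = s(c', d')) ∧
    (∀ c d c' d', Missing E c d → Missing E c' d' →
      DepArc E c d a b → DepArc E c' d' a b → s(c, d) = s(c', d'))

/-- The dependency digraph of `E` has no directed cycle. -/
def NoDepCycle (E : V → V → Prop) : Prop :=
  ¬ ∃ (k : ℕ) (a b : ℕ → V), 0 < k ∧
    (∀ i < k, Missing E (a i) (b i)) ∧
    (∀ i < k, ∀ j < k, i ≠ j → s(a i, b i) ≠ s(a j, b j)) ∧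
    (∀ i < k, DepArc E (a i) (b i) (a ((i + 1) % k)) (b ((i + 1) % k)))


/-! ### Auxiliary machinery -/

set_option maxHeartbeats 1600000

section Aux

lemma mg_adj (E : V → V → Prop) {x y : V} :
    (missingGraph E).Adj x y ↔ x ≠ y ∧ ¬ E x y ∧ ¬ E y x := by
  simp [missingGraph, SimpleGraph.fromRel_adj]; tauto

lemma Missing.symm {E : V → V → Prop} {x y : V} (h : Missing E x y) : Missing E y x :=
  ⟨h.1.symm, h.2.2, h.2.1⟩

lemma Missing.adj {E : V → V → Prop} {x y : V} (h : Missing E x y) :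
    (missingGraph E).Adj x y := (mg_adj E).mpr ⟨h.1, h.2.1, h.2.2⟩

lemma nadj_l {E : V → V → Prop} {x y : V} (h : E x y) : ¬ (missingGraph E).Adj x y :=
  fun ha => ((mg_adj E).mp ha).2.1 h

lemma nadj_r {E : V → V → Prop} {x y : V} (h : E y x) : ¬ (missingGraph E).Adj x y :=
  fun ha => ((mg_adj E).mp ha).2.2 h

lemma nadj_nm {E : V → V → Prop} {x y : V} (h : ¬ Missing E x y) (hne : x ≠ y) :
    ¬ (missingGraph E).Adj x y :=
  fun ha => h ⟨hne, ((mg_adj E).mp ha).2.1, ((mg_adj E).mp ha).2.2⟩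

lemma loses_swap {E : V → V → Prop} {a b c d : V} (h : Loses E a b c d) : Loses E b a d c :=
  ⟨h.2.2.1, h.2.2.2, h.1, h.2.1⟩

/-- All the basic facts extracted from `Loses E a b c d`. -/
structure LF (E : V → V → Prop) (a b c d : V) : Prop where
  eac : E a c
  ebd : E b d
  nad : ¬ E a d
  nbc : ¬ E b c
  pad : ∀ z, E a z → ¬ E z d
  pbc : ∀ z, E b z → ¬ E z c
  hab : a ≠ b
  hcd : c ≠ d
  hac : a ≠ c
  hbd : b ≠ d
  had : a ≠ d
  hbc : b ≠ c

lemma lf {E : V → V → Prop} {a b c d : V} (hor : Oriented E)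
    (hab : Missing E a b) (hcd : Missing E c d) (h : Loses E a b c d) : LF E a b c d := by
  obtain ⟨eac, hnd, ebd, hnc⟩ := h
  have nad : ¬ E a d := fun h' => hnd (Or.inl h')
  have nbc : ¬ E b c := fun h' => hnc (Or.inl h')
  have had : a ≠ d := by rintro rfl; exact hcd.2.2 eac
  have hbc : b ≠ c := by rintro rfl; exact hcd.2.1 ebd
  have pad : ∀ z, E a z → ¬ E z d := by
    intro z h1 h2
    exact hnd (Or.inr ⟨Ne.symm had, nad, z, h1, h2⟩)
  have pbc : ∀ z, E b z → ¬ E z c := by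
    intro z h1 h2
    exact hnc (Or.inr ⟨Ne.symm hbc, nbc, z, h1, h2⟩)
  exact ⟨eac, ebd, nad, nbc, pad, pbc, hab.1, hcd.1,
    fun h' => hor.1 c (h' ▸ eac), fun h' => hor.1 d (h' ▸ ebd), had, hbc⟩

section elims
variable {W : Type*} (G : SimpleGraph W)

lemma no_C4 (h : IsEmpty (cycleGraph 4 ↪g G))
    {a b c d : W} (hac : a ≠ c) (hbd : b ≠ d)
    (h1 : G.Adj a b) (h2 : G.Adj b c) (h3 : G.Adj c d) (h4 : G.Adj d a)
    (n1 : ¬ G.Adj a c) (n2 : ¬ G.Adj b d) : False := by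
  have hab := h1.ne; have hbc := h2.ne; have hcd := h3.ne; have hda := h4.ne
  refine h.elim ⟨⟨![a,b,c,d], ?_⟩, ?_⟩
  · intro i j hij; fin_cases i <;> fin_cases j <;> simp_all
  · intro i j; fin_cases i <;> fin_cases j <;>
      simp [cycleGraph, SimpleGraph.fromRel_adj, G.adj_comm] <;> tauto

lemma no_2K2 (h : IsEmpty ((cycleGraph 4)ᶜ ↪g G))
    {a b c d : W} (hac : a ≠ c) (had : a ≠ d) (hbc : b ≠ c) (hbd : b ≠ d)
    (h1 : G.Adj a b) (h2 : G.Adj c d)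
    (n1 : ¬ G.Adj a c) (n2 : ¬ G.Adj a d) (n3 : ¬ G.Adj b c) (n4 : ¬ G.Adj b d) : False := by
  have hab := h1.ne; have hcd := h2.ne
  refine h.elim ⟨⟨![a,c,b,d], ?_⟩, ?_⟩
  · intro i j hij; fin_cases i <;> fin_cases j <;> simp_all
  · intro i j; fin_cases i <;> fin_cases j <;>
      simp [cycleGraph, SimpleGraph.compl_adj, SimpleGraph.fromRel_adj, G.adj_comm] <;> tauto

lemma no_C5 (h : IsEmpty (cycleGraph 5 ↪g G))
    {a b c d e : W} (hac : a ≠ c) (had : a ≠ d) (hbd : b ≠ d) (hbe : b ≠ e) (hce : c ≠ e)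
    (h1 : G.Adj a b) (h2 : G.Adj b c) (h3 : G.Adj c d) (h4 : G.Adj d e) (h5 : G.Adj e a)
    (n1 : ¬ G.Adj a c) (n2 : ¬ G.Adj a d) (n3 : ¬ G.Adj b d) (n4 : ¬ G.Adj b e)
    (n5 : ¬ G.Adj c e) : False := by
  have hab := h1.ne; have hbc := h2.ne; have hcd := h3.ne; have hde := h4.ne; have hea := h5.ne
  refine h.elim ⟨⟨![a,b,c,d,e], ?_⟩, ?_⟩
  · intro i j hij; fin_cases i <;> fin_cases j <;> simp_all
  · intro i j; fin_cases i <;> fin_cases j <;>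
      simp [cycleGraph, SimpleGraph.fromRel_adj, G.adj_comm] <;> tauto

lemma no_chair (h : IsEmpty (chairGraph ↪g G))
    {a b c d e : W} (hac : a ≠ c) (had : a ≠ d) (hae : a ≠ e) (hbd : b ≠ d) (hbe : b ≠ e)
    (hde : d ≠ e)
    (h1 : G.Adj a b) (h2 : G.Adj b c) (h3 : G.Adj c d) (h4 : G.Adj c e)
    (n1 : ¬ G.Adj a c) (n2 : ¬ G.Adj a d) (n3 : ¬ G.Adj a e) (n4 : ¬ G.Adj b d)
    (n5 : ¬ G.Adj b e) (n6 : ¬ G.Adj d e) : False := by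
  have hab := h1.ne; have hbc := h2.ne; have hcd := h3.ne; have hce := h4.ne
  refine h.elim ⟨⟨![a,b,c,d,e], ?_⟩, ?_⟩
  · intro i j hij; fin_cases i <;> fin_cases j <;> simp_all
  · intro i j; fin_cases i <;> fin_cases j <;>
      simp [chairGraph, SimpleGraph.fromRel_adj, G.adj_comm] <;> tauto

lemma no_cochair (h : IsEmpty (chairGraphᶜ ↪g G))
    {a b c d e : W} (hab : a ≠ b) (hbc : b ≠ c) (hcd : c ≠ d) (hce : c ≠ e)
    (h1 : G.Adj a c) (h2 : G.Adj a d) (h3 : G.Adj a e) (h4 : G.Adj b d) (h5 : G.Adj b e)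
    (h6 : G.Adj d e)
    (n1 : ¬ G.Adj a b) (n2 : ¬ G.Adj b c) (n3 : ¬ G.Adj c d) (n4 : ¬ G.Adj c e) : False := by
  have hac := h1.ne; have had := h2.ne; have hae := h3.ne; have hbd := h4.ne
  have hbe := h5.ne; have hde := h6.ne
  refine h.elim ⟨⟨![a,b,c,d,e], ?_⟩, ?_⟩
  · intro i j hij; fin_cases i <;> fin_cases j <;> simp_all
  · intro i j; fin_cases i <;> fin_cases j <;>
      simp [chairGraph, SimpleGraph.compl_adj, SimpleGraph.fromRel_adj, G.adj_comm] <;> tauto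

lemma p4_ends (K : Finset W) (hcl : ∀ x ∈ K, ∀ y ∈ K, x ≠ y → G.Adj x y)
    (hind : ∀ x y, x ∉ K → y ∉ K → ¬ G.Adj x y)
    {w x y z : W} (hwy : w ≠ y) (hxz : x ≠ z)
    (e1 : G.Adj w x) (e2 : G.Adj x y) (e3 : G.Adj y z)
    (n1 : ¬ G.Adj w y) (n3 : ¬ G.Adj x z) :
    w ∉ K ∧ x ∈ K ∧ y ∈ K ∧ z ∉ K := by
  have hx : x ∈ K := by
    by_contra hx
    have hy : y ∈ K := by
      by_contra hy
      exact hind x y hx hy e2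
    have hw : w ∈ K := by
      by_contra hw
      exact hind w x hw hx e1
    exact n1 (hcl w hw y hy hwy)
  have hy : y ∈ K := by
    by_contra hy
    have hz : z ∈ K := by
      by_contra hz
      exact hind y z hy hz e3
    exact n3 (hcl x hx z hz hxz)
  refine ⟨fun hw => n1 (hcl w hw y hy hwy), hx, hy, fun hz => n3 (hcl x hx z hz hxz)⟩

end elims

open Finset in
theorem split_of_noC4C5 {W : Type*} [Fintype W] (G : SimpleGraph W)
    (hC4 : IsEmpty (cycleGraph 4 ↪g G)) (h2K2 : IsEmpty ((cycleGraph 4)ᶜ ↪g G))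
    (hC5 : IsEmpty (cycleGraph 5 ↪g G)) :
    ∃ K : Finset W, (∀ x ∈ K, ∀ y ∈ K, x ≠ y → G.Adj x y) ∧
      (∀ x y, x ∉ K → y ∉ K → ¬ G.Adj x y) := by
  classical
  set IsCl : Finset W → Prop := fun K => ∀ x ∈ K, ∀ y ∈ K, x ≠ y → G.Adj x y with hIsCl
  set eO : Finset W → ℕ := fun K =>
    (((univ \ K) ×ˢ (univ \ K)).filter (fun p => G.Adj p.1 p.2)).card with heOdef
  set big : ℕ := ((univ ×ˢ univ).filter (fun p : W × W => G.Adj p.1 p.2)).card + 1 with hbigdef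
  have heO : ∀ K, eO K < big := by
    intro K
    have h1 : eO K ≤ big - 1 := by
      apply card_le_card
      intro p hp
      exact mem_filter.mpr ⟨mem_product.mpr ⟨mem_univ _, mem_univ _⟩, (mem_filter.mp hp).2⟩
    omega
  set f : Finset W → ℤ := fun K => (big : ℤ) * K.card - eO K with hfdef
  have hSne : ((univ : Finset (Finset W)).filter IsCl).Nonempty := by
    refine ⟨∅, ?_⟩
    simp [hIsCl]
  obtain ⟨K, hKS, hKmax⟩ := Finset.exists_max_image _ f hSne
  have hK : IsCl K := by simpa using (mem_filter.mp hKS).2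
  have hKle : ∀ K', IsCl K' → f K' ≤ f K := by
    intro K' h'
    exact hKmax K' (mem_filter.mpr ⟨mem_univ _, h'⟩)
  have hmaxcard : ∀ K', IsCl K' → K'.card ≤ K.card := by
    intro K' h'
    by_contra hgt
    push_neg at hgt
    have h1 := hKle K' h'
    have h2 := heO K'
    have h3 := heO K
    have hcast : (K.card : ℤ) + 1 ≤ K'.card := by exact_mod_cast hgt
    have hb0 : (0:ℤ) ≤ (big:ℤ) := Int.natCast_nonneg _
    have h2' : (eO K' : ℤ) < big := by exact_mod_cast h2
    have h3' : (eO K : ℤ) < big := by exact_mod_cast h3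
    have he0 : (0:ℤ) ≤ (eO K : ℤ) := Int.natCast_nonneg _
    have hmul : (big:ℤ) * ((K.card:ℤ) + 1) ≤ (big:ℤ) * (K'.card:ℤ) :=
      mul_le_mul_of_nonneg_left hcast hb0
    simp only [hfdef] at h1
    nlinarith [hmul, h1]
  have hminE : ∀ K', IsCl K' → K'.card = K.card → eO K ≤ eO K' := by
    intro K' h' hc
    have h1 := hKle K' h'
    simp only [hfdef, hc] at h1
    omega
  refine ⟨K, hK, ?_⟩
  have key : ∀ x y, x ∉ K → y ∉ K → G.Adj x y →
      (∀ w ∈ K, G.Adj w y → G.Adj w x) → False := by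
    intro x y hx hy hxy hB
    have hxK : ∃ u ∈ K, ¬ G.Adj u x := by
      by_contra hall
      push_neg at hall
      have hcl : IsCl (insert x K) := by
        intro p hp q hq hpq
        rcases mem_insert.mp hp with rfl | hp' <;> rcases mem_insert.mp hq with rfl | hq'
        · exact absurd rfl hpq
        · exact (hall q hq').symm
        · exact hall p hp'
        · exact hK p hp' q hq' hpq
      have := hmaxcard _ hcl
      rw [card_insert_of_notMem hx] at this
      omega
    obtain ⟨u, huK, hux⟩ := hxK
    have huy : ¬ G.Adj u y := fun h => hux (hB u huK h)
    have hunx : u ≠ x := fun h => hx (h ▸ huK)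
    have huny : u ≠ y := fun h => hy (h ▸ huK)
    have hDsub : ∀ w ∈ K, ¬ G.Adj w x → w = u := by
      intro w hwK hwx
      by_contra hwu
      have hwy : ¬ G.Adj w y := fun h => hwx (hB w hwK h)
      exact no_2K2 G h2K2 hunx huny (fun h => hx (h ▸ hwK)) (fun h => hy (h ▸ hwK))
        (hK u huK w hwK (fun h => hwu h.symm)) hxy hux huy hwx hwy
    have hK' : IsCl (insert x (K.erase u)) := by
      intro p hp q hq hpq
      rcases mem_insert.mp hp with rfl | hp' <;> rcases mem_insert.mp hq with rfl | hq'
      · exact absurd rfl hpq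
      · have hq2 := mem_of_mem_erase hq'
        have hqx : G.Adj q p := by
          by_contra hn
          exact (ne_of_mem_erase hq') (hDsub q hq2 hn)
        exact hqx.symm
      · have hp2 := mem_of_mem_erase hp'
        by_contra hn
        exact (ne_of_mem_erase hp') (hDsub p hp2 hn)
      · exact hK p (mem_of_mem_erase hp') q (mem_of_mem_erase hq') hpq
    have hxnot : x ∉ K.erase u := fun h => hx (mem_of_mem_erase h)
    have hcard' : (insert x (K.erase u)).card = K.card := by
      rw [card_insert_of_notMem hxnot, card_erase_of_mem huK]
      have h1 : 1 ≤ K.card := card_pos.mpr ⟨u, huK⟩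
      omega
    have hz : ∃ z, z ∉ K ∧ z ≠ x ∧ G.Adj u z := by
      by_contra hno
      push_neg at hno
      have hlt : eO (insert x (K.erase u)) < eO K := by
        apply card_lt_card
        rw [Finset.ssubset_iff_of_subset]
        · refine ⟨(x, y), ?_, ?_⟩
          · exact mem_filter.mpr ⟨mem_product.mpr
              ⟨mem_sdiff.mpr ⟨mem_univ _, hx⟩, mem_sdiff.mpr ⟨mem_univ _, hy⟩⟩, hxy⟩
          · intro hmem
            have h1 := (mem_product.mp (mem_filter.mp hmem).1).1
            exact (mem_sdiff.mp h1).2 (mem_insert_self _ _)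
        · intro p hp
          obtain ⟨hprod, hadj⟩ := mem_filter.mp hp
          obtain ⟨hp1, hp2⟩ := mem_product.mp hprod
          have hp1x : p.1 ∉ insert x (K.erase u) := (mem_sdiff.mp hp1).2
          have hp2x : p.2 ∉ insert x (K.erase u) := (mem_sdiff.mp hp2).2
          have hp1nx : p.1 ≠ x := fun h => hp1x (h ▸ mem_insert_self _ _)
          have hp2nx : p.2 ≠ x := fun h => hp2x (h ▸ mem_insert_self _ _)
          have hp1e : p.1 ∉ K.erase u := fun h => hp1x (mem_insert_of_mem h)
          have hp2e : p.2 ∉ K.erase u := fun h => hp2x (mem_insert_of_mem h)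
          have hp1K : p.1 ∉ K := by
            intro hmem
            have he1 : p.1 = u := by
              by_contra hne
              exact hp1e (mem_erase.mpr ⟨hne, hmem⟩)
            rcases em (p.2 ∈ K) with h2 | h2
            · have he2 : p.2 = u := by
                by_contra hne
                exact hp2e (mem_erase.mpr ⟨hne, h2⟩)
              rw [he1, he2] at hadj
              exact G.loopless.irrefl _ hadj
            · exact (hno p.2 h2 hp2nx) (he1 ▸ hadj)
          have hp2K : p.2 ∉ K := by
            intro hmem
            have he2 : p.2 = u := by
              by_contra hne
              exact hp2e (mem_erase.mpr ⟨hne, hmem⟩)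
            exact (hno p.1 hp1K hp1nx) (he2 ▸ hadj.symm)
          exact mem_filter.mpr ⟨mem_product.mpr
            ⟨mem_sdiff.mpr ⟨mem_univ _, hp1K⟩, mem_sdiff.mpr ⟨mem_univ _, hp2K⟩⟩, hadj⟩
      have := hminE _ hK' hcard'
      omega
    obtain ⟨z, hzK, hzx, huz⟩ := hz
    have hzy : z ≠ y := fun h => huy (h ▸ huz)
    have hw : ∃ w ∈ K, w ≠ u ∧ ¬ G.Adj w z := by
      by_contra hall
      push_neg at hall
      have hcl : IsCl (insert z K) := by
        intro p hp q hq hpq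
        rcases mem_insert.mp hp with rfl | hp' <;> rcases mem_insert.mp hq with rfl | hq'
        · exact absurd rfl hpq
        · rcases em (q = u) with rfl | hqu
          · exact huz.symm
          · exact (hall q hq' hqu).symm
        · rcases em (p = u) with rfl | hpu
          · exact huz
          · exact hall p hp' hpu
        · exact hK p hp' q hq' hpq
      have := hmaxcard _ hcl
      rw [card_insert_of_notMem hzK] at this
      omega
    obtain ⟨w, hwK, hwu, hwz⟩ := hw
    have hwx : G.Adj w x := by
      by_contra hn
      exact hwu (hDsub w hwK hn)
    have hwnz : w ≠ z := fun h => hzK (h ▸ hwK)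
    have huw : G.Adj u w := hK u huK w hwK (fun h => hwu h.symm)
    by_cases hzx2 : G.Adj z x
    · exact no_C4 G hC4 hunx hwnz huw hwx hzx2.symm huz.symm hux hwz
    · have hzy2 : G.Adj z y := by
        by_contra hzy3
        exact no_2K2 G h2K2 hunx huny hzx hzy huz hxy hux huy hzx2 hzy3
      by_cases hwy : G.Adj w y
      · exact no_C4 G hC4 huny hwnz huw hwy hzy2.symm huz.symm huy hwz
      · exact no_C5 G hC5 hunx huny (fun h => huy (h ▸ huw)) hwnz (fun h => hzx h.symm)
          huw hwx hxy hzy2.symm huz.symm hux huy hwy hwz (fun h => hzx2 h.symm)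
  intro x y hx hy hadj
  have hAB : (∀ w ∈ K, G.Adj w y → G.Adj w x) ∨ (∀ w ∈ K, G.Adj w x → G.Adj w y) := by
    by_contra hc
    push_neg at hc
    obtain ⟨⟨b, hbK, hby, hbnx⟩, ⟨a, haK, hax, hany⟩⟩ := hc
    have hab : a ≠ b := fun h => hbnx (h ▸ hax)
    exact no_C4 G hC4 (fun (h : x = b) => hx (h.symm ▸ hbK)) (fun (h : a = y) => hy (h ▸ haK))
      hax.symm (hK a haK b hbK hab) hby hadj.symm (fun h => hbnx h.symm) hany
  cases hAB with
  | inl h => exact key x y hx hy hadj h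
  | inr h => exact key y x hy hx hadj.symm h

lemma cyc_contra {k : ℕ} (hk : 0 < k) (f : ℕ → ℕ)
    (hstep : ∀ i < k, f i < f ((i + 1) % k)) : False := by
  have mono : ∀ n, f 0 + n ≤ f (n % k) := by
    intro n
    induction n with
    | zero => simp [Nat.zero_mod]
    | succ n ih =>
      have h1 : f (n % k) < f ((n % k + 1) % k) := hstep (n % k) (Nat.mod_lt _ hk)
      rw [Nat.mod_add_mod] at h1
      omega
  have h2 := mono k
  rw [Nat.mod_self] at h2
  omega

section typing
variable {E : V → V → Prop}

lemma typeRL (hC4 : IsEmpty (cycleGraph 4 ↪g missingGraph E))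
    (h2K2 : IsEmpty ((cycleGraph 4)ᶜ ↪g missingGraph E)) {a b c d : V}
    (hab : Missing E a b) (hcd : Missing E c d) (F : LF E a b c d) :
    (E d a ∧ Missing E b c) ∨ (E c b ∧ Missing E a d) := by
  by_cases hda : E d a
  · left
    refine ⟨hda, F.hbc, F.nbc, ?_⟩
    intro hcb
    exact no_2K2 (missingGraph E) h2K2 F.hac F.had F.hbc F.hbd hab.adj hcd.adj
      (nadj_l F.eac) (nadj_r hda) (nadj_r hcb) (nadj_l F.ebd)
  · by_cases hcb : E c b
    · exact Or.inr ⟨hcb, F.had, F.nad, hda⟩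
    · exfalso
      exact no_C4 (missingGraph E) hC4 F.hac F.hbd hab.adj
        (Missing.adj ⟨F.hbc, F.nbc, hcb⟩) hcd.adj (Missing.adj ⟨Ne.symm F.had, hda, F.nad⟩)
        (nadj_l F.eac) (nadj_l F.ebd)

/-- out-degree, both arcs of type R. -/
lemma out_R (hC4 : IsEmpty (cycleGraph 4 ↪g missingGraph E))
    (h2K2 : IsEmpty ((cycleGraph 4)ᶜ ↪g missingGraph E))
    (hch : IsEmpty (chairGraph ↪g missingGraph E))
    (hcch : IsEmpty (chairGraphᶜ ↪g missingGraph E)) {a b c d e f : V}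
    (hab : Missing E a b) (hcd : Missing E c d)
    (hef : Missing E e f) (F1 : LF E a b c d) (F2 : LF E a b e f)
    (hda : E d a) (hmbc : Missing E b c) (hfa : E f a) (hmbe : Missing E b e) :
    c = e ∧ d = f := by
  have ncf : ¬ E c f := fun h => F2.pad c F1.eac h
  have nfc : ¬ E f c := fun h => F1.pbc f F2.ebd h
  have hcf : c ≠ f := by rintro rfl; exact F2.nad F1.eac
  have hmcf : Missing E c f := ⟨hcf, ncf, nfc⟩
  have hdf : d = f := by
    by_contra hdf
    by_cases hm : Missing E d f
    · exact no_2K2 (missingGraph E) h2K2 F1.had F2.had F1.hbd F2.hbd hab.adj hm.adj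
        (nadj_r hda) (nadj_r hfa) (nadj_l F1.ebd) (nadj_l F2.ebd)
    · exact no_chair (missingGraph E) hch F1.hac F1.had F2.had F1.hbd F2.hbd hdf
        hab.adj hmbc.adj hcd.adj hmcf.adj
        (nadj_l F1.eac) (nadj_r hda) (nadj_r hfa) (nadj_l F1.ebd) (nadj_l F2.ebd)
        (nadj_nm hm hdf)
  subst hdf
  refine ⟨?_, rfl⟩
  by_contra hce
  by_cases hm : Missing E c e
  · exact no_cochair (missingGraph E) hcch F1.hbd (Ne.symm F1.had) F1.hac F2.hac
      hab.symm.adj hmbc.adj hmbe.adj hcd.symm.adj hef.symm.adj hm.adj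
      (nadj_l F1.ebd) (nadj_l hda) (nadj_l F1.eac) (nadj_l F2.eac)
  · exact no_C4 (missingGraph E) hC4 hce F1.hbd hmbc.symm.adj hmbe.adj
      hef.adj hcd.symm.adj (nadj_nm hm hce) (nadj_l F1.ebd)

lemma out_unique (hC4 : IsEmpty (cycleGraph 4 ↪g missingGraph E))
    (h2K2 : IsEmpty ((cycleGraph 4)ᶜ ↪g missingGraph E))
    (hch : IsEmpty (chairGraph ↪g missingGraph E))
    (hcch : IsEmpty (chairGraphᶜ ↪g missingGraph E)) {a b c d e f : V}
    (hor : Oriented E) (hab : Missing E a b)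
    (hcd : Missing E c d) (hef : Missing E e f)
    (h1 : Loses E a b c d) (h2 : Loses E a b e f) : c = e ∧ d = f := by
  have F1 := lf hor hab hcd h1
  have F2 := lf hor hab hef h2
  rcases typeRL hC4 h2K2 hab hcd F1 with ⟨hda, hmbc⟩ | ⟨hcb, hmad⟩ <;>
    rcases typeRL hC4 h2K2 hab hef F2 with ⟨hfa, hmbe⟩ | ⟨heb, hmaf⟩
  · exact out_R hC4 h2K2 hch hcch hab hcd hef F1 F2 hda hmbc hfa hmbe
  · exfalso
    have ncf : ¬ E c f := fun h => F2.pad c F1.eac h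
    have nfc : ¬ E f c := fun h => F1.pbc f F2.ebd h
    have hcf : c ≠ f := by rintro rfl; exact F2.nad F1.eac
    exact no_C4 (missingGraph E) hC4 F1.hac F2.hbd hab.adj hmbc.adj
      (Missing.adj ⟨hcf, ncf, nfc⟩) hmaf.symm.adj (nadj_l F1.eac) (nadj_l F2.ebd)
  · exfalso
    have nde : ¬ E d e := fun h => F2.pbc d F1.ebd h
    have ned : ¬ E e d := fun h => F1.pad e F2.eac h
    have hde : d ≠ e := by rintro rfl; exact F2.nbc F1.ebd
    exact no_C4 (missingGraph E) hC4 F2.hac F1.hbd hab.adj hmbe.adj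
      (Missing.adj ⟨Ne.symm hde, ned, nde⟩) hmad.symm.adj (nadj_l F2.eac) (nadj_l F1.ebd)
  · have h := out_R hC4 h2K2 hch hcch hab.symm hcd.symm hef.symm
      (lf hor hab.symm hcd.symm (loses_swap h1)) (lf hor hab.symm hef.symm (loses_swap h2))
      hcb hmad heb hmaf
    exact ⟨h.2, h.1⟩

/-- in-degree, both arcs of type R. -/
lemma in_R (hC4 : IsEmpty (cycleGraph 4 ↪g missingGraph E))
    (h2K2 : IsEmpty ((cycleGraph 4)ᶜ ↪g missingGraph E))
    (hch : IsEmpty (chairGraph ↪g missingGraph E))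
    (hcch : IsEmpty (chairGraphᶜ ↪g missingGraph E)) {a b c d e f : V}
    (hab : Missing E a b) (hcd : Missing E c d) (hef : Missing E e f)
    (F1 : LF E c d a b) (F2 : LF E e f a b)
    (hbc : E b c) (hmda : Missing E d a) (hbe : E b e) (hmfa : Missing E f a) :
    c = e ∧ d = f := by
  have ncf : ¬ E c f := fun h => F1.pad f h F2.ebd
  have nfc : ¬ E f c := fun h => F2.pbc c h F1.eac
  have hcf : c ≠ f := by rintro rfl; exact F2.nbc F1.eac
  have hmcf : Missing E c f := ⟨hcf, ncf, nfc⟩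
  have hdf : d = f := by
    by_contra hdf
    by_cases hm : Missing E d f
    · exact no_cochair (missingGraph E) hcch (Ne.symm F1.hac) F1.had (Ne.symm F1.hbd)
        (Ne.symm F2.hbd) hab.adj hmda.symm.adj hmfa.symm.adj hcd.adj hmcf.adj hm.adj
        (nadj_r F1.eac) (nadj_r hbc) (nadj_r F1.ebd) (nadj_r F2.ebd)
    · exact no_C4 (missingGraph E) hC4 (Ne.symm F1.hac) hdf hmda.symm.adj hcd.symm.adj
        hmcf.adj hmfa.adj (nadj_r F1.eac) (nadj_nm hm hdf)
  subst hdf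
  refine ⟨?_, rfl⟩
  by_contra hce
  by_cases hm : Missing E c e
  · exact no_2K2 (missingGraph E) h2K2 (Ne.symm F1.hac) (Ne.symm F2.hac)
      (Ne.symm F1.had) (Ne.symm F2.had) hab.adj hm.adj
      (nadj_r F1.eac) (nadj_r F2.eac) (nadj_l hbc) (nadj_l hbe)
  · exact no_chair (missingGraph E) hch (Ne.symm F1.hbd) (Ne.symm F1.had) (Ne.symm F2.had)
      (Ne.symm F1.hac) (Ne.symm F2.hac) hce hab.symm.adj hmda.symm.adj hcd.symm.adj
      hef.symm.adj (nadj_r F1.ebd) (nadj_l hbc) (nadj_l hbe) (nadj_r F1.eac)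
      (nadj_r F2.eac) (nadj_nm hm hce)

lemma in_unique (hC4 : IsEmpty (cycleGraph 4 ↪g missingGraph E))
    (h2K2 : IsEmpty ((cycleGraph 4)ᶜ ↪g missingGraph E))
    (hch : IsEmpty (chairGraph ↪g missingGraph E))
    (hcch : IsEmpty (chairGraphᶜ ↪g missingGraph E)) {a b c d e f : V}
    (hor : Oriented E) (hab : Missing E a b) (hcd : Missing E c d) (hef : Missing E e f)
    (h1 : Loses E c d a b) (h2 : Loses E e f a b) : c = e ∧ d = f := by
  have F1 := lf hor hcd hab h1
  have F2 := lf hor hef hab h2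
  rcases typeRL hC4 h2K2 hcd hab F1 with ⟨hbc, hmda⟩ | ⟨had, hmcb⟩ <;>
    rcases typeRL hC4 h2K2 hef hab F2 with ⟨hbe, hmfa⟩ | ⟨haf, hmeb⟩
  · exact in_R hC4 h2K2 hch hcch hab hcd hef F1 F2 hbc hmda hbe hmfa
  · exfalso
    have nde : ¬ E d e := fun h => F1.pbc e h F2.eac
    have ned : ¬ E e d := fun h => F2.pad d h F1.ebd
    have hde : d ≠ e := by rintro rfl; exact F2.nad F1.ebd
    exact no_C4 (missingGraph E) hC4 (Ne.symm F2.hac) (Ne.symm F1.hbd) hab.adj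
      hmeb.symm.adj (Missing.adj ⟨Ne.symm hde, ned, nde⟩) hmda.adj
      (nadj_r F2.eac) (nadj_r F1.ebd)
  · exfalso
    have ncf : ¬ E c f := fun h => F1.pad f h F2.ebd
    have nfc : ¬ E f c := fun h => F2.pbc c h F1.eac
    have hcf : c ≠ f := by rintro rfl; exact F2.nbc F1.eac
    exact no_C4 (missingGraph E) hC4 (Ne.symm F1.hac) (Ne.symm F2.hbd) hab.adj
      hmcb.symm.adj (Missing.adj ⟨hcf, ncf, nfc⟩) hmfa.adj
      (nadj_r F1.eac) (nadj_r F2.ebd)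
  · have h := in_R hC4 h2K2 hch hcch hab.symm hcd.symm hef.symm
      (lf hor hcd.symm hab.symm (loses_swap h1)) (lf hor hef.symm hab.symm (loses_swap h2))
      had hmcb haf hmeb
    exact ⟨h.2, h.1⟩

end typing

end Aux

/-- If the missing graph of an oriented graph `D` is a comb, then the dependency digraph of
`D` has no directed cycle; consequently it is a disjoint union of directed paths. -/
theorem dependency_paths_of_missing_comb [Fintype V] (E : V → V → Prop)
    (hor : Oriented E) (hcomb : IsComb (missingGraph E)) :
    NoDepCycle E ∧ DepDegLeOne E := by
  obtain ⟨hC4, h2K2, hC5, hch, hcch⟩ := hcomb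
  constructor
  · -- no directed cycle
    rintro ⟨k, a, b, hk, hmiss, -, harc⟩
    classical
    obtain ⟨K, hcl, hind⟩ := split_of_noC4C5 (missingGraph E) hC4 h2K2 hC5
    set s : ℕ → V := fun i => if a i ∈ K then b i else a i with hs
    have bundle : ∀ i < k, E (s ((i + 1) % k)) (s i) ∧
        (∀ z, E (s i) z → ¬ E z (s ((i + 1) % k))) ∧ s i ∉ K := by
      intro i hi
      have hi' : (i + 1) % k < k := Nat.mod_lt _ hk
      have hmi := hmiss i hi
      have hmi' := hmiss _ hi'
      rcases harc i hi with hl | hl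
      · have F := lf hor hmi hmi' hl
        rcases typeRL hC4 h2K2 hmi hmi' F with ⟨hda, hmbc⟩ | ⟨hcb, hmad⟩
        · obtain ⟨hw, hx, hy, hz⟩ := p4_ends (missingGraph E) K hcl hind F.hac F.hbd
            hmi.adj hmbc.adj hmi'.adj (nadj_l F.eac) (nadj_l F.ebd)
          have hsi : s i = a i := by simp [hs, hw]
          have hsi' : s ((i + 1) % k) = b ((i + 1) % k) := by simp [hs, hy]
          rw [hsi, hsi']
          exact ⟨hda, F.pad, hsi ▸ (hsi.symm ▸ hw)⟩
        · obtain ⟨hw, hx, hy, hz⟩ := p4_ends (missingGraph E) K hcl hind F.hbd F.hac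
            hmi.symm.adj hmad.adj hmi'.symm.adj (nadj_l F.ebd) (nadj_l F.eac)
          have hsi : s i = b i := by simp [hs, hx]
          have hsi' : s ((i + 1) % k) = a ((i + 1) % k) := by simp [hs, hz]
          rw [hsi, hsi']
          exact ⟨hcb, F.pbc, hw⟩
      · have F := lf hor hmi hmi'.symm hl
        rcases typeRL hC4 h2K2 hmi hmi'.symm F with ⟨hda, hmbc⟩ | ⟨hcb, hmad⟩
        · obtain ⟨hw, hx, hy, hz⟩ := p4_ends (missingGraph E) K hcl hind F.hac F.hbd
            hmi.adj hmbc.adj hmi'.symm.adj (nadj_l F.eac) (nadj_l F.ebd)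
          have hsi : s i = a i := by simp [hs, hw]
          have hsi' : s ((i + 1) % k) = a ((i + 1) % k) := by simp [hs, hz]
          rw [hsi, hsi']
          exact ⟨hda, F.pad, hw⟩
        · obtain ⟨hw, hx, hy, hz⟩ := p4_ends (missingGraph E) K hcl hind F.hbd F.hac
            hmi.symm.adj hmad.adj hmi'.adj (nadj_l F.ebd) (nadj_l F.eac)
          have hsi : s i = b i := by simp [hs, hx]
          have hsi' : s ((i + 1) % k) = b ((i + 1) % k) := by simp [hs, hy]
          rw [hsi, hsi']
          exact ⟨hcb, F.pbc, hw⟩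
    set S : Finset V := (Finset.range k).image s with hS
    set f : ℕ → ℕ := fun i => (S.filter (fun z => E (s i) z)).card with hf
    refine cyc_contra hk f ?_
    intro i hi
    have hi' : (i + 1) % k < k := Nat.mod_lt _ hk
    obtain ⟨hes, hcond, hsK⟩ := bundle i hi
    have hs'K : s ((i + 1) % k) ∉ K := (bundle _ hi').2.2
    apply Finset.card_lt_card
    rw [Finset.ssubset_iff_of_subset]
    · refine ⟨s i, ?_, ?_⟩
      · exact Finset.mem_filter.mpr
          ⟨Finset.mem_image.mpr ⟨i, Finset.mem_range.mpr hi, rfl⟩, hes⟩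
      · intro hmem
        exact hor.1 _ ((Finset.mem_filter.mp hmem).2)
    · intro z hz
      obtain ⟨hzS, hez⟩ := Finset.mem_filter.mp hz
      refine Finset.mem_filter.mpr ⟨hzS, ?_⟩
      obtain ⟨j, hj, rfl⟩ := Finset.mem_image.mp hzS
      have hjK : s j ∉ K := (bundle j (Finset.mem_range.mp hj)).2.2
      have hne : s j ≠ s ((i + 1) % k) := by
        rintro heq
        rw [heq] at hez
        exact hor.2 _ _ hez hes
      have hnadj := hind (s j) (s ((i + 1) % k)) hjK hs'K
      rw [mg_adj] at hnadj
      push_neg at hnadj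
      rcases em (E (s j) (s ((i + 1) % k))) with h' | h'
      · exact absurd h' (hcond _ hez)
      · rcases em (E (s ((i + 1) % k)) (s j)) with h'' | h''
        · exact h''
        · exact absurd (hnadj hne h') h''
  · -- degrees at most one
    intro x y hxy
    constructor
    · intro c d c' d' hcd hc'd' h1 h2
      rcases h1 with h1 | h1 <;> rcases h2 with h2 | h2
      · obtain ⟨rfl, rfl⟩ := out_unique hC4 h2K2 hch hcch hor hxy hcd hc'd' h1 h2
        rfl
      · obtain ⟨rfl, rfl⟩ := out_unique hC4 h2K2 hch hcch hor hxy hcd hc'd'.symm h1 h2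
        exact Sym2.eq_swap
      · obtain ⟨rfl, rfl⟩ := out_unique hC4 h2K2 hch hcch hor hxy hcd.symm hc'd' h1 h2
        exact Sym2.eq_swap
      · obtain ⟨rfl, rfl⟩ := out_unique hC4 h2K2 hch hcch hor hxy hcd.symm hc'd'.symm h1 h2
        rfl
    · intro c d c' d' hcd hc'd' h1 h2
      rcases h1 with h1 | h1 <;> rcases h2 with h2 | h2
      · obtain ⟨rfl, rfl⟩ := in_unique hC4 h2K2 hch hcch hor hxy hcd hc'd' h1 h2
        rfl
      · obtain ⟨rfl, rfl⟩ := in_unique hC4 h2K2 hch hcch hor hxy hcd hc'd'.symm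
          h1 (loses_swap h2)
        exact Sym2.eq_swap
      · obtain ⟨rfl, rfl⟩ := in_unique hC4 h2K2 hch hcch hor hxy hcd.symm hc'd'
          (loses_swap h1) h2
        exact Sym2.eq_swap
      · obtain ⟨rfl, rfl⟩ := in_unique hC4 h2K2 hch hcch hor hxy hcd.symm hc'd'.symm
          (loses_swap h1) (loses_swap h2)
        rfl
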